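/- Fix an integer r. Suppose C, K : \mathbb{N} \to \mathbb{Z} satisfy, for all nonnegative integers m: C(m) = -2^m F_r - F_{r+1} - \sum_{j=0}^{m-1} \binom{m}{j} (2^{m-j} + 1) C(j) and K(m) = -2^m L_r - L_{r+1} - \sum_{j=0}^{m-1} \binom{m}{j} (2^{m-j} + 1) K(j) (empty sums when m = 0). Then for all nonnegative integers m: C(m) = -\delta_{m,0} F_r + (-1)^{m+1} \sum_{j=0}^{m} A(m,j) F_{j+m+r+1} and K(m) = -\delta_{m,0} L_r + (-1)^{m+1} \sum_{j=0}^{m} A(m,j) L_{j+m+r+1}, where \delta_{m,0} is the Kronecker delta. -/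

import Mathlib

/-- Fibonacci numbers over the integers, `F_{-n} = (-1)^{n-1} F_n`. -/
def fibZ (n : ℤ) : ℤ :=
  if 0 ≤ n then (Nat.fib n.toNat : ℤ)
  else (-1) ^ ((-n).toNat + 1) * (Nat.fib (-n).toNat : ℤ)

/-- Lucas numbers over the integers, `L_{-n} = (-1)^n L_n`. -/
def lucasZ (n : ℤ) : ℤ := fibZ (n - 1) + fibZ (n + 1)

/-- The Eulerian numbers `A(i,j) = ∑_{t=0}^{j} (-1)^t C(i+1,t) (j-t)^i`. -/
def eulerianA (i j : ℕ) : ℤ :=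
  ∑ t ∈ Finset.range (j + 1), (-1 : ℤ) ^ t * (Nat.choose (i + 1) t) * ((j - t : ℕ) ^ i : ℤ)

/-!
Write `φ` for the class of `X` in `ℤ[X] ⧸ (X² - X - 1)`. Every sequence `G` with
`G (n + 2) = G (n + 1) + G n`, such as `fibZ` and `lucasZ`, is a module over this ring, `φ` acting
as the shift. The Eulerian polynomial `P_m(x) = ∑ⱼ A(m,j) xʲ` equals `(1 - x)^(m+1) ∑ₖ k^m xᵏ`,
and `(1 - φ)⁻¹ = -φ`, so `(-φ)^(m+1) P_m(φ)` is an Abel-regularised `∑ₖ k^m φᵏ`; the closed forms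
are this element minus its `k = 0` term, acting on `G` at `r`. The recursion comes from the shift
rule `∑ₖ (k + a)^m xᵏ = x^(-a) (∑ₖ k^m xᵏ - ∑_{k<a} k^m xᵏ)` for `a = 1, 2`, combined through
`φ² = φ + 1`, and a solution of the recursion is unique.
-/

open Finset Polynomial AdjoinRoot fwdDiff_aux

-- Up to sign, `eulerianA m n` is the `(m + 1)`-st forward difference of `t ↦ t ^ m` at `n - m - 1`.
theorem eulerianA_eq_zero_of_lt {m n : ℕ} (h : m < n) : eulerianA m n = 0 := by
  have hΔ := congr_fun (fwdDiff_iter_pow_eq_zero_of_lt (R := ℤ) (Nat.lt_succ_self m))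
    ((n : ℤ) - (m + 1))
  rw [fwdDiff_iter_eq_sum_shift, ← sum_range_reflect, Pi.zero_apply] at hΔ
  rw [eulerianA, ← sum_range_add_sum_Ico _ (show m + 2 ≤ n + 1 by omega),
    sum_eq_zero (s := Ico _ _) fun t ht => by
      rw [Nat.choose_eq_zero_of_lt (by simp at ht; omega)]; simp, add_zero, ← hΔ]
  refine sum_congr rfl fun t ht => ?_
  rw [mem_range] at ht
  rw [show m.succ + 1 - 1 - t = m + 1 - t by omega, show m.succ - (m + 1 - t) = t by omega,
    Nat.choose_symm (by omega), smul_eq_mul, nsmul_one, Nat.cast_sub (by omega),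
    Nat.cast_sub (by omega)]
  push_cast
  ring

theorem PowerSeries.coeff_one_sub_X_pow {R : Type*} [CommRing R] (n t : ℕ) :
    coeff t ((1 - X : PowerSeries R) ^ n) = (-1) ^ t * n.choose t := by
  rw [sub_eq_add_neg, add_comm, add_pow]
  simp only [neg_pow X, one_pow, mul_one, map_sum, mul_comm _ (X ^ _), mul_assoc, coeff_X_pow_mul']
  rw [sum_eq_single t]
  · simp
  · intro j _ hj
    split_ifs with h
    · rw [← map_natCast (C (R := R)), ← map_one (C (R := R)), ← map_neg, ← map_pow, ← map_mul,
        coeff_C, if_neg (by omega)]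
    · rfl
  · intro ht
    simp [Nat.choose_eq_zero_of_lt (by simpa using ht)]

noncomputable def eulerianPoly (m : ℕ) : ℤ[X] :=
  ∑ j ∈ range (m + 1), C (eulerianA m j) * X ^ j

noncomputable def powerSumSeries (m : ℕ) : PowerSeries ℤ :=
  PowerSeries.mk fun k => (k : ℤ) ^ m

theorem coeff_eulerianPoly (m n : ℕ) : (eulerianPoly m).coeff n = eulerianA m n := by
  simp only [eulerianPoly, finsetSum_coeff, coeff_C_mul_X_pow, sum_ite_eq, mem_range]
  split_ifs with h
  · rfl
  · exact (eulerianA_eq_zero_of_lt (by omega)).symm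

theorem coe_eulerianPoly (m : ℕ) :
    (eulerianPoly m : PowerSeries ℤ) = (1 - PowerSeries.X) ^ (m + 1) * powerSumSeries m := by
  ext n
  rw [Polynomial.coeff_coe, coeff_eulerianPoly, PowerSeries.coeff_mul,
    Finset.Nat.sum_antidiagonal_eq_sum_range_succ_mk, eulerianA]
  refine sum_congr rfl fun t _ => ?_
  rw [PowerSeries.coeff_one_sub_X_pow, powerSumSeries, PowerSeries.coeff_mk]

theorem X_pow_mul_sum_powerSumSeries (m a : ℕ) :
    PowerSeries.X ^ a * ∑ j ∈ range (m + 1),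
        PowerSeries.C ((m.choose j : ℤ) * a ^ (m - j)) * powerSumSeries j
      = powerSumSeries m - (PowerSeries.trunc a (powerSumSeries m) : PowerSeries ℤ) := by
  ext n
  rw [PowerSeries.coeff_X_pow_mul', map_sub, Polynomial.coeff_coe, PowerSeries.coeff_trunc]
  split_ifs with h1 h2 h2
  · omega
  · obtain ⟨k, rfl⟩ := Nat.exists_eq_add_of_le h1
    simp only [powerSumSeries, map_sum, PowerSeries.coeff_C_mul, PowerSeries.coeff_mk, sub_zero,
      Nat.add_sub_cancel_left, Nat.cast_add, add_comm (a : ℤ), add_pow]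
    exact sum_congr rfl fun j _ => by ring
  · simp
  · omega

theorem X_pow_mul_sum_eulerianPoly (m a : ℕ) :
    X ^ a * ∑ j ∈ range (m + 1),
        C ((m.choose j : ℤ) * a ^ (m - j)) * (1 - X) ^ (m - j) * eulerianPoly j
      = eulerianPoly m - (1 - X) ^ (m + 1) * PowerSeries.trunc a (powerSumSeries m) := by
  apply Polynomial.coe_injective
  have hterm : ∀ j ∈ range (m + 1),
      ((C ((m.choose j : ℤ) * a ^ (m - j)) * (1 - X) ^ (m - j) * eulerianPoly j : ℤ[X]) :
        PowerSeries ℤ) = (1 - PowerSeries.X) ^ (m + 1) *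
          (PowerSeries.C ((m.choose j : ℤ) * a ^ (m - j)) * powerSumSeries j) := by
    intro j hj
    obtain ⟨k, rfl⟩ := Nat.exists_eq_add_of_le (Nat.lt_succ_iff.mp (mem_range.mp hj))
    rw [Nat.add_sub_cancel_left, show j + k + 1 = k + (j + 1) by ring, pow_add]
    push_cast
    rw [coe_eulerianPoly]
    ring
  rw [Polynomial.coe_mul, ← coeToPowerSeries.ringHom_apply (φ := ∑ _ ∈ _, _), map_sum]
  simp only [coeToPowerSeries.ringHom_apply]
  rw [sum_congr rfl hterm, ← mul_sum, Polynomial.coe_pow, Polynomial.coe_X, mul_left_comm,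
    X_pow_mul_sum_powerSumSeries]
  push_cast
  rw [coe_eulerianPoly]
  ring

noncomputable def fibCharPoly : ℤ[X] := X ^ 2 - X - 1

local notation "φ" => root fibCharPoly

theorem root_fibCharPoly_sq : φ ^ 2 = φ + 1 := by
  have h : mk fibCharPoly (X ^ 2 - X - 1) = 0 := mk_self
  rw [map_sub, map_sub, map_pow, mk_X, map_one] at h
  linear_combination h

theorem one_sub_root_pow_mul_neg_root_pow (k : ℕ) : (1 - φ) ^ k * (-φ) ^ k = 1 := by
  rw [← mul_pow, show (1 - φ) * -φ = 1 by linear_combination root_fibCharPoly_sq, one_pow]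

noncomputable def regularizedPowerSum (m : ℕ) : AdjoinRoot fibCharPoly :=
  mk fibCharPoly ((-X) ^ (m + 1) * eulerianPoly m)

theorem root_pow_mul_sum_regularizedPowerSum (m a : ℕ) :
    φ ^ a * ∑ j ∈ range (m + 1), (m.choose j * a ^ (m - j)) * regularizedPowerSum j
      = regularizedPowerSum m - mk fibCharPoly (PowerSeries.trunc a (powerSumSeries m)) := by
  -- Map `X_pow_mul_sum_eulerianPoly` to the quotient; multiply by `(-φ)^(m+1) = (1 - φ)^(-m-1)`.
  have h := congrArg (mk fibCharPoly) (X_pow_mul_sum_eulerianPoly m a)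
  simp only [map_mul, map_sub, map_sum, map_pow, map_one, mk_X, map_natCast] at h
  have hsum : ∑ j ∈ range (m + 1), (m.choose j * a ^ (m - j)) * regularizedPowerSum j =
      (-φ) ^ (m + 1) * ∑ j ∈ range (m + 1), m.choose j * a ^ (m - j) * (1 - φ) ^ (m - j) *
        mk fibCharPoly (eulerianPoly j) := by
    rw [mul_sum]
    refine sum_congr rfl fun j hj => ?_
    obtain ⟨k, rfl⟩ := Nat.exists_eq_add_of_le (Nat.lt_succ_iff.mp (mem_range.mp hj))
    simp only [regularizedPowerSum, map_mul, map_pow, map_neg, mk_X, Nat.add_sub_cancel_left]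
    rw [show j + k + 1 = k + (j + 1) by ring, pow_add]
    linear_combination (-((j + k).choose j : AdjoinRoot fibCharPoly) * a ^ k * (-φ) ^ (j + 1) *
      mk fibCharPoly (eulerianPoly j)) * one_sub_root_pow_mul_neg_root_pow k
  have hm : regularizedPowerSum m = (-φ) ^ (m + 1) * mk fibCharPoly (eulerianPoly m) := by
    simp [regularizedPowerSum]
  rw [hsum, hm]
  linear_combination (-φ) ^ (m + 1) * h - mk fibCharPoly (PowerSeries.trunc a (powerSumSeries m)) *
    one_sub_root_pow_mul_neg_root_pow (m + 1)

theorem mk_trunc_one_powerSumSeries (m : ℕ) :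
    mk fibCharPoly (PowerSeries.trunc 1 (powerSumSeries m)) = if m = 0 then 1 else 0 := by
  simp [PowerSeries.trunc_succ, powerSumSeries, zero_pow_eq]

theorem mk_trunc_two_powerSumSeries (m : ℕ) :
    mk fibCharPoly (PowerSeries.trunc 2 (powerSumSeries m)) = (if m = 0 then 1 else 0) + φ := by
  simp [PowerSeries.trunc_succ, powerSumSeries, zero_pow_eq, monomial_one_one_eq_X]

noncomputable def ledinPoly (m : ℕ) : ℤ[X] :=
  (-X) ^ (m + 1) * eulerianPoly m - C (if m = 0 then 1 else 0)

theorem mk_ledinPoly (m : ℕ) :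
    mk fibCharPoly (ledinPoly m) = regularizedPowerSum m - if m = 0 then 1 else 0 := by
  rw [ledinPoly, map_sub, mk_C, apply_ite (of fibCharPoly), map_one, map_zero, regularizedPowerSum]

theorem mk_ledinPoly_rec (m : ℕ) :
    mk fibCharPoly (ledinPoly m) = -2 ^ m - φ -
      ∑ j ∈ range m, (m.choose j * (2 ^ (m - j) + 1)) * mk fibCharPoly (ledinPoly j) := by
  have h1 := root_pow_mul_sum_regularizedPowerSum m 1
  have h2 := root_pow_mul_sum_regularizedPowerSum m 2
  rw [mk_trunc_one_powerSumSeries] at h1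
  rw [mk_trunc_two_powerSumSeries] at h2
  simp only [Nat.cast_one, one_pow, mul_one, pow_one] at h1
  set S₁ := ∑ j ∈ range (m + 1), (m.choose j : AdjoinRoot fibCharPoly) * regularizedPowerSum j
  set S₂ := ∑ j ∈ range (m + 1), (m.choose j * (2 : AdjoinRoot fibCharPoly) ^ (m - j)) *
    regularizedPowerSum j
  have hfull : ∑ j ∈ range (m + 1), (m.choose j * (2 ^ (m - j) + 1)) *
      mk fibCharPoly (ledinPoly j) = S₁ + S₂ - (2 ^ m + 1) := by
    simp only [S₁, S₂, mk_ledinPoly, mul_sub, sum_sub_distrib, mul_ite, mul_one, mul_zero,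
      sum_ite_eq', mem_range, Nat.zero_lt_succ, if_true, Nat.choose_zero_right, Nat.cast_one,
      one_mul, Nat.sub_zero, add_mul, mul_add, sum_add_distrib]
    ring
  rw [sum_range_succ, Nat.choose_self, Nat.sub_self, mk_ledinPoly m] at hfull
  rw [mk_ledinPoly]
  -- `φ⁻¹ = φ - 1` and `φ⁻² = 2 - φ`
  linear_combination hfull + (φ - 1) * h1 + (2 - φ) * h2 +
    ((φ - 1) * S₂ - S₁ + 1) * root_fibCharPoly_sq

local notation "σ" => shiftₗ ℤ ℤ (1 : ℤ)

theorem aeval_shiftₗ_C_apply (a : ℤ) (G : ℤ → ℤ) (r : ℤ) : aeval σ (C a) G r = a * G r := by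
  simp

theorem aeval_shiftₗ_C_mul_apply (a : ℤ) (p : ℤ[X]) (G : ℤ → ℤ) (r : ℤ) :
    aeval σ (C a * p) G r = a * aeval σ p G r := by
  rw [map_mul, Module.End.mul_apply, aeval_shiftₗ_C_apply]

theorem aeval_shiftₗ_X_pow_apply (k : ℕ) (G : ℤ → ℤ) (r : ℤ) :
    aeval σ (X ^ k : ℤ[X]) G r = G (r + k) := by
  simp [shiftₗ_pow_apply]

theorem aeval_shiftₗ_eq_of_mk_eq {G : ℤ → ℤ} (hG : ∀ n, G (n + 2) = G (n + 1) + G n)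
    {p q : ℤ[X]} (h : mk fibCharPoly p = mk fibCharPoly q) : aeval σ p G = aeval σ q G := by
  obtain ⟨c, hc⟩ := mk_eq_mk.mp h
  have hf : aeval σ fibCharPoly G = 0 := by
    ext n
    simp [fibCharPoly, shiftₗ_pow_apply, shiftₗ_apply, hG]
  rw [← sub_eq_zero, ← LinearMap.sub_apply, ← map_sub, hc, mul_comm, map_mul,
    Module.End.mul_apply, hf, map_zero]

theorem aeval_shiftₗ_ledinPoly_apply (G : ℤ → ℤ) (r : ℤ) (m : ℕ) :
    aeval σ (ledinPoly m) G r = -(if m = 0 then (1 : ℤ) else 0) * G r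
      + (-1) ^ (m + 1) * ∑ j ∈ range (m + 1), eulerianA m j * G (j + m + r + 1) := by
  have hmon : ∀ j, (-X : ℤ[X]) ^ (m + 1) * (C (eulerianA m j) * X ^ j)
      = C ((-1) ^ (m + 1) * eulerianA m j) * X ^ (j + m + 1) := fun j => by
    rw [neg_pow, C_mul, C_pow, C_neg, C_1]; ring
  simp only [ledinPoly, eulerianPoly, mul_sum, hmon, map_sub, map_sum, LinearMap.sub_apply,
    LinearMap.sum_apply, Pi.sub_apply, Finset.sum_apply, aeval_shiftₗ_C_mul_apply,
    aeval_shiftₗ_X_pow_apply, aeval_shiftₗ_C_apply]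
  rw [sub_eq_neg_add, neg_mul]
  congr 1
  refine sum_congr rfl fun j _ => ?_
  push_cast
  ring_nf

theorem aeval_shiftₗ_ledinPoly_apply_rec {G : ℤ → ℤ} (hG : ∀ n, G (n + 2) = G (n + 1) + G n)
    (r : ℤ) (m : ℕ) :
    aeval σ (ledinPoly m) G r = -2 ^ m * G r - G (r + 1) -
      ∑ j ∈ range m, (m.choose j : ℤ) * (2 ^ (m - j) + 1) * aeval σ (ledinPoly j) G r := by
  have h := aeval_shiftₗ_eq_of_mk_eq hG (q := C (-2 ^ m) - X ^ 1 -
      ∑ j ∈ range m, C ((m.choose j : ℤ) * (2 ^ (m - j) + 1)) * ledinPoly j) (by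
    rw [mk_ledinPoly_rec m]
    simp [map_ofNat])
  rw [h]
  simp only [map_sub, map_sum, LinearMap.sub_apply, LinearMap.sum_apply, Pi.sub_apply,
    Finset.sum_apply, aeval_shiftₗ_C_apply, aeval_shiftₗ_C_mul_apply, aeval_shiftₗ_X_pow_apply,
    Nat.cast_one]

theorem eq_closed_form_of_ledin_rec {G : ℤ → ℤ} (hG : ∀ n, G (n + 2) = G (n + 1) + G n) (r : ℤ)
    {D : ℕ → ℤ} (hD : ∀ m : ℕ, D m = -2 ^ m * G r - G (r + 1)
      - ∑ j ∈ range m, (m.choose j : ℤ) * (2 ^ (m - j) + 1) * D j) (m : ℕ) :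
    D m = -(if m = 0 then (1 : ℤ) else 0) * G r
      + (-1) ^ (m + 1) * ∑ j ∈ range (m + 1), eulerianA m j * G (j + m + r + 1) := by
  rw [← aeval_shiftₗ_ledinPoly_apply]
  induction m using Nat.strong_induction_on with
  | _ m ih =>
    rw [hD, aeval_shiftₗ_ledinPoly_apply_rec hG]
    congr 1
    exact sum_congr rfl fun j hj => by rw [ih j (mem_range.mp hj)]

theorem fibZ_natCast (n : ℕ) : fibZ n = Nat.fib n := by
  simp [fibZ]

theorem fibZ_neg_natCast (n : ℕ) : fibZ (-n) = (-1) ^ (n + 1) * Nat.fib n := by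
  rcases n.eq_zero_or_pos with rfl | hn
  · simp [fibZ]
  · rw [fibZ, if_neg (by omega), neg_neg, Int.toNat_natCast]

theorem fibZ_add_two (n : ℤ) : fibZ (n + 2) = fibZ (n + 1) + fibZ n := by
  obtain ⟨k, rfl | rfl⟩ := Int.eq_nat_or_neg n
  · rw [← Nat.cast_ofNat, ← Nat.cast_add, ← Nat.cast_one, ← Nat.cast_add, fibZ_natCast,
      fibZ_natCast, fibZ_natCast, Nat.fib_add_two, Nat.cast_add, add_comm]
  · match k with
    | 0 => decide
    | 1 => decide
    | k + 2 =>
      rw [show -((k + 2 : ℕ) : ℤ) + 2 = -k by push_cast; ring,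
        show -((k + 2 : ℕ) : ℤ) + 1 = -(k + 1 : ℕ) by push_cast; ring,
        fibZ_neg_natCast, fibZ_neg_natCast, fibZ_neg_natCast, Nat.fib_add_two]
      push_cast
      ring

theorem lucasZ_add_two (n : ℤ) : lucasZ (n + 2) = lucasZ (n + 1) + lucasZ n := by
  have h₁ := fibZ_add_two (n - 1)
  have h₂ := fibZ_add_two (n + 1)
  simp only [lucasZ]
  ring_nf at h₁ h₂ ⊢
  linear_combination h₁ + h₂

theorem ledin_constants_closed_form (r : ℤ) (C K : ℕ → ℤ)
    (hC : ∀ m : ℕ, C m = -2 ^ m * fibZ r - fibZ (r + 1)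
      - ∑ j ∈ Finset.range m, (m.choose j : ℤ) * (2 ^ (m - j) + 1) * C j)
    (hK : ∀ m : ℕ, K m = -2 ^ m * lucasZ r - lucasZ (r + 1)
      - ∑ j ∈ Finset.range m, (m.choose j : ℤ) * (2 ^ (m - j) + 1) * K j) :
    ∀ m : ℕ,
      C m = -(if m = 0 then (1 : ℤ) else 0) * fibZ r
          + (-1) ^ (m + 1) * ∑ j ∈ Finset.range (m + 1), eulerianA m j * fibZ (j + m + r + 1) ∧
      K m = -(if m = 0 then (1 : ℤ) else 0) * lucasZ r
          + (-1) ^ (m + 1) * ∑ j ∈ Finset.range (m + 1), eulerianA m j * lucasZ (j + m + r + 1) :=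
  fun m => ⟨eq_closed_form_of_ledin_rec fibZ_add_two r hC m,
    eq_closed_form_of_ledin_rec lucasZ_add_two r hK m⟩
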